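/- Let $Q \subset \mathbb{R}^n$ be a polytope and $\mu$ a Borel probability measure on the space of polytopes with bounded support such that $h_Q = \int h_P\, \mu(dP)$. Then every $P$ in the support of $\mu$ is a scaled summand of $Q$, i.e., there exist $\alpha > 0$ and a polytope $R$ with $Q = \alpha P + R$. -/

import Mathlib

/-!
Write `d_K(u, v) = h_K(u) + h_K(v) - h_K(u + v)` (`sfnDefect K u v`) for the defect of
subadditivity of the support function. A convex body `K` is a Minkowski summand of `Q` exactly
when `d_K ≤ d_Q`, because then `h_Q - h_K` is sublinear and hence itself a support function.
Integrating, `d_Q = ∫ d_P dμ`, so `d_Q > 0` wherever `d_P > 0` for `P` in the support of `μ`.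
For polytopes both defects are linear on the cones of a common finite polyhedral fan of `E × E`;
these cones are finitely generated (Minkowski–Weyl), and comparing the two linear functions on
the generators yields `α > 0` with `α d_P ≤ d_Q`. Hence `α P` is a summand of `Q`, and summands
of polytopes are polytopes.
-/

open scoped Pointwise RealInnerProductSpace
open MeasureTheory

noncomputable section

/-- Support function of a convex body. -/
def sfn {n : ℕ} (K : ConvexBody (EuclideanSpace ℝ (Fin n))) (u : EuclideanSpace ℝ (Fin n)) : ℝ :=
  sSup ((fun x => ⟪x, u⟫) '' (K : Set (EuclideanSpace ℝ (Fin n))))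

/-- The support of a measure on a topological space. -/
def msupport {X : Type*} [TopologicalSpace X] [MeasurableSpace X] (μ : Measure X) : Set X :=
  {x | ∀ U : Set X, IsOpen U → x ∈ U → μ U ≠ 0}

/-- A convex body is a polytope if it is the convex hull of a finite set. -/
def IsPolytope {n : ℕ} (P : ConvexBody (EuclideanSpace ℝ (Fin n))) : Prop :=
  ∃ s : Finset (EuclideanSpace ℝ (Fin n)),
    (P : Set (EuclideanSpace ℝ (Fin n))) = convexHull ℝ ↑s

/-- The class of polytopes. -/
def Polytopes (n : ℕ) : Set (ConvexBody (EuclideanSpace ℝ (Fin n))) :=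
  {P | IsPolytope P}

open Filter Topology

namespace PointedCone

variable {𝕜 F : Type*} [Field 𝕜] [LinearOrder 𝕜] [IsStrictOrderedRing 𝕜]
  [AddCommGroup F] [Module 𝕜 F]

lemma eq_zero_or_neg_of_mem_hull {ℓ : Module.Dual 𝕜 F} {s : Set F} (hs : ∀ x ∈ s, ℓ x < 0)
    {x : F} (hx : x ∈ hull 𝕜 s) : x = 0 ∨ ℓ x < 0 := by
  induction hx using Submodule.span_induction with
  | mem x hx => exact .inr (hs x hx)
  | zero => exact .inl rfl
  | add x y _ _ hx hy =>
    rcases hx with rfl | hx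
    · simpa using hy
    rcases hy with rfl | hy
    · simpa using Or.inr hx
    · exact .inr (by rw [map_add]; linarith)
  | smul c x _ hx =>
    rcases hx with rfl | hx
    · simp
    rcases c.2.eq_or_lt with hc | hc
    · left; rw [← Nonneg.coe_smul, ← hc, zero_smul]
    · right; rw [← Nonneg.coe_smul, map_smul, smul_eq_mul]; exact mul_neg_of_pos_of_neg hc hx

lemma fg_top [Module.Finite 𝕜 F] : (⊤ : PointedCone 𝕜 F).FG := by
  classical
  obtain ⟨s, hs⟩ := Module.Finite.fg_top (R := 𝕜) (M := F)
  refine ⟨s ∪ -s, Submodule.eq_top_iff'.2 fun x => ?_⟩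
  have hx : x ∈ Submodule.span 𝕜 (s : Set F) := hs ▸ Submodule.mem_top
  set H := hull 𝕜 ((s ∪ -s : Finset F) : Set F)
  suffices x ∈ H ∧ -x ∈ H from this.1
  induction hx using Submodule.span_induction with
  | mem x hx => exact ⟨subset_hull (by simp [hx]), subset_hull (by simp [hx])⟩
  | zero => simp
  | add x y _ _ hx hy => exact ⟨add_mem hx.1 hy.1, by rw [neg_add]; exact add_mem hx.2 hy.2⟩
  | smul c x _ hx =>
    rcases le_or_gt 0 c with hc | hc
    · exact ⟨smul_mem _ hc hx.1, by rw [← smul_neg]; exact smul_mem _ hc hx.2⟩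
    · refine ⟨?_, ?_⟩
      · rw [← neg_smul_neg]; exact smul_mem _ (neg_nonneg.2 hc.le) hx.2
      · rw [← neg_smul]; exact smul_mem _ (neg_nonneg.2 hc.le) hx.1

lemma smul_sub_smul_mem_hull_image2 (ℓ : Module.Dual 𝕜 F) {S T : Set F} {x y : F}
    (hx : x ∈ hull 𝕜 S) (hy : y ∈ hull 𝕜 T) :
    ℓ x • y - ℓ y • x ∈ hull 𝕜 (Set.image2 (fun g h => ℓ g • h - ℓ h • g) S T) := by
  induction hx, hy using Submodule.span_induction₂ with
  | mem_mem x y hx hy => exact subset_hull (Set.mem_image2_of_mem hx hy)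
  | zero_left y _ => simp
  | zero_right x _ => simp
  | add_left x x' y _ _ _ h h' => convert add_mem h h' using 1; simp only [map_add]; module
  | add_right x y y' _ _ _ h h' => convert add_mem h h' using 1; simp only [map_add]; module
  | smul_left c x y _ _ h =>
    convert Submodule.smul_mem _ c h using 1
    simp only [← Nonneg.coe_smul, map_smul, smul_eq_mul]; module
  | smul_right c x y _ _ h =>
    convert Submodule.smul_mem _ c h using 1
    simp only [← Nonneg.coe_smul, map_smul, smul_eq_mul]; module

/-- Fourier–Motzkin elimination: `C ⊓ {ℓ ≥ 0}` is generated by the generators `g` of `C` with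
`ℓ g ≥ 0` together with `ℓ g • h - ℓ h • g` for generators `ℓ g ≥ 0 > ℓ h`. -/
lemma FG.inf_dual_singleton {C : PointedCone 𝕜 F} (hC : C.FG) (ℓ : Module.Dual 𝕜 F) :
    (C ⊓ dual .id {ℓ}).FG := by
  classical
  obtain ⟨G, rfl⟩ := hC
  set Gnn := G.filter (0 ≤ ℓ ·)
  set Gneg := G.filter (ℓ · < 0)
  set G' := Gnn ∪ Finset.image₂ (fun g h => ℓ g • h - ℓ h • g) Gnn Gneg
  have hGnn : hull 𝕜 (Gnn : Set F) ≤ hull 𝕜 G' := Submodule.span_mono (by simp [G'])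
  have hG'ℓ : hull 𝕜 (Set.image2 (fun g h => ℓ g • h - ℓ h • g) Gnn Gneg) ≤ hull 𝕜 G' :=
    Submodule.span_mono (by simp [G'])
  refine ⟨G', le_antisymm (Submodule.span_le.2 fun g hg => ?_) fun z ⟨hzG, hzℓ⟩ => ?_⟩
  · simp only [G', Finset.coe_union, Finset.coe_image₂, Set.mem_union, Set.mem_image2] at hg
    rcases hg with hg | ⟨x, hx, y, hy, rfl⟩
    · exact ⟨subset_hull (Finset.mem_filter.1 hg).1, by simpa using (Finset.mem_filter.1 hg).2⟩
    · obtain ⟨hxG, hxℓ⟩ := Finset.mem_filter.1 hx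
      obtain ⟨hyG, hyℓ⟩ := Finset.mem_filter.1 hy
      refine ⟨?_, by simp [mul_comm]⟩
      rw [sub_eq_add_neg, ← neg_smul]
      exact add_mem (smul_mem _ hxℓ (subset_hull hyG)) (smul_mem _ (by linarith) (subset_hull hxG))
  · have hG : G = Gnn ∪ Gneg := by
      simp only [Gnn, Gneg, ← not_le]; exact (Finset.filter_union_filter_not_eq _ _).symm
    rw [SetLike.mem_coe, hG, Finset.coe_union, Submodule.span_union, Submodule.mem_sup] at hzG
    obtain ⟨x, hx, y, hy, rfl⟩ := hzG
    have hzℓ : 0 ≤ ℓ (x + y) := by simpa using hzℓ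
    rcases eq_zero_or_neg_of_mem_hull (fun g hg => (Finset.mem_filter.1 hg).2) hy with rfl | hyℓ
    · simpa using hGnn hx
    have hxℓ : 0 < ℓ x := by rw [map_add] at hzℓ; linarith
    have hz : x + y = (ℓ (x + y) / ℓ x) • x + (ℓ x)⁻¹ • (ℓ x • y - ℓ y • x) := by
      rw [map_add]
      match_scalars
      · field_simp; ring
      · field_simp
    rw [hz]
    exact add_mem (smul_mem _ (div_nonneg hzℓ hxℓ.le) (hGnn hx))
      (smul_mem _ (inv_nonneg.2 hxℓ.le) (hG'ℓ (smul_sub_smul_mem_hull_image2 ℓ hx hy)))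

/-- One half of the Minkowski–Weyl theorem. -/
theorem DualFG.fg [Module.Finite 𝕜 F] {M : Type*} [AddCommGroup M] [Module 𝕜 M]
    {p : M →ₗ[𝕜] F →ₗ[𝕜] 𝕜} {C : PointedCone 𝕜 F} (hC : C.DualFG p) : C.FG := by
  classical
  obtain ⟨s, rfl⟩ := hC.id
  clear hC
  induction s using Finset.induction_on with
  | empty => simpa using fg_top
  | insert ℓ s _ ih =>
    rw [Finset.coe_insert, dual_insert, inf_comm]
    exact FG.inf_dual_singleton ih ℓ

lemma DualFG.comap {R N N' : Type*} [CommRing R] [PartialOrder R] [IsOrderedRing R]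
    [AddCommGroup N] [Module R N] [AddCommGroup N'] [Module R N'] {C : PointedCone R N}
    (hC : C.DualFG .id) (A : N' →ₗ[R] N) : (C.comap A).DualFG .id := by
  classical
  obtain ⟨s, rfl⟩ := hC
  exact ⟨s.image (· ∘ₗ A), by ext; simp⟩

end PointedCone

section PiecewiseLinear

variable {F F' : Type*} [AddCommGroup F] [Module ℝ F] [AddCommGroup F'] [Module ℝ F']

lemma PointedCone.FG.eventually_smul_le {C : PointedCone ℝ F} (hC : C.FG) {a b : Module.Dual ℝ F}
    (ha : ∀ z ∈ C, 0 ≤ a z) (hba : ∀ z ∈ C, 0 < b z → 0 < a z) :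
    ∀ᶠ α in 𝓝[>] (0 : ℝ), ∀ z ∈ C, α * b z ≤ a z := by
  obtain ⟨G, rfl⟩ := hC
  have hG : ∀ g ∈ G, ∀ᶠ α in 𝓝[>] (0 : ℝ), α * b g ≤ a g := by
    intro g hg
    have hgC : g ∈ PointedCone.hull ℝ (G : Set F) := PointedCone.subset_hull hg
    rcases (ha g hgC).eq_or_lt with hag | hag
    · have hbg : b g ≤ 0 := not_lt.1 fun hbg => (hba g hgC hbg).ne hag
      filter_upwards [self_mem_nhdsWithin] with α (hα : 0 < α)
      rw [← hag]; exact mul_nonpos_of_nonneg_of_nonpos hα.le hbg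
    · have : Tendsto (fun α : ℝ => α * b g) (𝓝[>] 0) (𝓝 0) :=
        tendsto_nhdsWithin_of_tendsto_nhds (by simpa using (continuous_mul_const (b g)).tendsto 0)
      exact (this.eventually (gt_mem_nhds hag)).mono fun _ => le_of_lt
  filter_upwards [(eventually_all_finset G).2 hG] with α hα z hz
  have hle : PointedCone.hull ℝ (G : Set F) ≤ PointedCone.dual .id {a - α • b} :=
    Submodule.span_le.2 fun g hg => by simpa using hα g hg
  simpa using hle hz

def IsPiecewiseLinear (f : F → ℝ) : Prop :=
  ∃ (ι : Type) (_ : Finite ι) (C : ι → PointedCone ℝ F) (ℓ : ι → Module.Dual ℝ F),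
    (∀ i, (C i).DualFG .id) ∧ (∀ z, ∃ i, z ∈ C i) ∧ ∀ i, ∀ z ∈ C i, f z = ℓ i z

namespace IsPiecewiseLinear

variable {f g : F → ℝ}

lemma exists_common_refinement (hf : IsPiecewiseLinear f) (hg : IsPiecewiseLinear g) :
    ∃ (ι : Type) (_ : Finite ι) (C : ι → PointedCone ℝ F) (ℓ ℓ' : ι → Module.Dual ℝ F),
      (∀ i, (C i).DualFG .id) ∧ (∀ z, ∃ i, z ∈ C i) ∧
        ∀ i, ∀ z ∈ C i, f z = ℓ i z ∧ g z = ℓ' i z := by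
  obtain ⟨ι, _, C, ℓ, hC, hcov, hfC⟩ := hf
  obtain ⟨ι', _, C', ℓ', hC', hcov', hgC'⟩ := hg
  refine ⟨ι × ι', inferInstance, fun i => C i.1 ⊓ C' i.2, fun i => ℓ i.1, fun i => ℓ' i.2,
    fun i => (hC i.1).inf (hC' i.2), fun z => ?_, fun i z hz => ⟨hfC _ z hz.1, hgC' _ z hz.2⟩⟩
  obtain ⟨i, hi⟩ := hcov z
  obtain ⟨j, hj⟩ := hcov' z
  exact ⟨(i, j), hi, hj⟩

lemma add (hf : IsPiecewiseLinear f) (hg : IsPiecewiseLinear g) :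
    IsPiecewiseLinear (fun z => f z + g z) := by
  obtain ⟨ι, _, C, ℓ, ℓ', hC, hcov, hfg⟩ := hf.exists_common_refinement hg
  exact ⟨ι, inferInstance, C, fun i => ℓ i + ℓ' i, hC, hcov, fun i z hz => by
    simp [(hfg i z hz).1, (hfg i z hz).2]⟩

lemma sub (hf : IsPiecewiseLinear f) (hg : IsPiecewiseLinear g) :
    IsPiecewiseLinear (fun z => f z - g z) := by
  obtain ⟨ι, _, C, ℓ, ℓ', hC, hcov, hfg⟩ := hf.exists_common_refinement hg
  exact ⟨ι, inferInstance, C, fun i => ℓ i - ℓ' i, hC, hcov, fun i z hz => by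
    simp [(hfg i z hz).1, (hfg i z hz).2]⟩

lemma comp_linearMap (hf : IsPiecewiseLinear f) (A : F' →ₗ[ℝ] F) :
    IsPiecewiseLinear (fun z => f (A z)) := by
  obtain ⟨ι, _, C, ℓ, hC, hcov, hfC⟩ := hf
  exact ⟨ι, inferInstance, fun i => (C i).comap A, fun i => ℓ i ∘ₗ A, fun i => (hC i).comap A,
    fun z => hcov (A z), fun i z hz => hfC i (A z) hz⟩

lemma eventually_smul_le [Module.Finite ℝ F] (hf : IsPiecewiseLinear f)
    (hg : IsPiecewiseLinear g) (hf0 : ∀ z, 0 ≤ f z) (hgf : ∀ z, 0 < g z → 0 < f z) :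
    ∀ᶠ α in 𝓝[>] (0 : ℝ), ∀ z, α * g z ≤ f z := by
  obtain ⟨ι, _, C, ℓ, ℓ', hC, hcov, hfg⟩ := hf.exists_common_refinement hg
  have hcell : ∀ i, ∀ᶠ α in 𝓝[>] (0 : ℝ), ∀ z ∈ C i, α * ℓ' i z ≤ ℓ i z := fun i =>
    PointedCone.FG.eventually_smul_le (hC i).fg (fun z hz => (hfg i z hz).1 ▸ hf0 z)
      fun z hz => by simpa only [(hfg i z hz).1, (hfg i z hz).2] using hgf z
  filter_upwards [eventually_all.2 hcell] with α hα z
  obtain ⟨i, hi⟩ := hcov z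
  simpa only [(hfg i z hi).1, (hfg i z hi).2] using hα i z hi

end IsPiecewiseLinear

end PiecewiseLinear

lemma msupport_eq_support {X : Type*} [TopologicalSpace X] [MeasurableSpace X] (μ : Measure X) :
    msupport μ = μ.support := by
  ext x
  simp only [msupport, Measure.support_eq_forall_isOpen, Set.mem_ofPred_eq, pos_iff_ne_zero]
  exact ⟨fun h U hx hU => h U hU hx, fun h U hU hx => h U hx hU⟩

lemma ae_mem_msupport {X : Type*} [TopologicalSpace X] [HereditarilyLindelofSpace X]
    [MeasurableSpace X] (μ : Measure X) : ∀ᵐ x ∂μ, x ∈ msupport μ :=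
  msupport_eq_support μ ▸ Measure.support_mem_ae

lemma integral_pos_of_mem_msupport {X : Type*} [TopologicalSpace X] [MeasurableSpace X]
    {μ : Measure X} {f : X → ℝ} (hf : Continuous f) (hf_nonneg : 0 ≤ f) (hfi : Integrable f μ)
    {x : X} (hx : x ∈ msupport μ) (hfx : 0 < f x) : 0 < ∫ y, f y ∂μ :=
  (integral_pos_iff_support_of_nonneg hf_nonneg hfi).2 <|
    pos_iff_ne_zero.2 (hx _ (isOpen_ne_fun hf continuous_const) hfx.ne')

instance ConvexBody.secondCountableTopology {V : Type*} [NormedAddCommGroup V] [NormedSpace ℝ V]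
    [SecondCountableTopology V] : SecondCountableTopology (ConvexBody V) :=
  (show Isometry fun K : ConvexBody V =>
      (⟨⟨K, K.isCompact⟩, K.nonempty⟩ : TopologicalSpace.NonemptyCompacts V) from
    fun K L => (ConvexBody.hausdorffEDist_coe K L :)).isEmbedding.secondCountableTopology

section SupportFunction

variable {n : ℕ}

local notation "E" => EuclideanSpace ℝ (Fin n)

lemma isCompact_inner_image (K : ConvexBody E) (u : E) :
    IsCompact ((fun x => ⟪x, u⟫) '' (K : Set E)) :=
  K.isCompact.image (continuous_id.inner continuous_const)

lemma inner_le_sfn {K : ConvexBody E} {x : E} (hx : x ∈ K) (u : E) : ⟪x, u⟫ ≤ sfn K u :=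
  le_csSup (isCompact_inner_image K u).bddAbove ⟨x, hx, rfl⟩

lemma sfn_le {K : ConvexBody E} {u : E} {c : ℝ} (h : ∀ x ∈ K, ⟪x, u⟫ ≤ c) : sfn K u ≤ c :=
  csSup_le (K.nonempty.image _) (by rintro _ ⟨x, hx, rfl⟩; exact h x hx)

lemma exists_mem_inner_eq_sfn (K : ConvexBody E) (u : E) : ∃ x ∈ K, ⟪x, u⟫ = sfn K u :=
  (isCompact_inner_image K u).sSup_mem (K.nonempty.image _)

lemma sfn_eq_of_forall_le {K : ConvexBody E} {x u : E} (hx : x ∈ K)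
    (h : ∀ y ∈ K, ⟪y, u⟫ ≤ ⟪x, u⟫) : sfn K u = ⟪x, u⟫ :=
  (sfn_le h).antisymm (inner_le_sfn hx u)

lemma sfn_mono {K L : ConvexBody E} (h : K ≤ L) (u : E) : sfn K u ≤ sfn L u :=
  sfn_le fun _ hx => inner_le_sfn (h hx) u

lemma sfn_zero (u : E) : sfn (0 : ConvexBody E) u = 0 := by
  simp [sfn, ConvexBody.coe_zero]

lemma sfn_add (K L : ConvexBody E) (u : E) : sfn (K + L) u = sfn K u + sfn L u := by
  refine le_antisymm (sfn_le fun z hz => ?_) ?_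
  · rw [← SetLike.mem_coe, ConvexBody.coe_add] at hz
    obtain ⟨x, hx, y, hy, rfl⟩ := hz
    rw [inner_add_left]
    exact add_le_add (inner_le_sfn hx u) (inner_le_sfn hy u)
  · obtain ⟨x, hx, hxu⟩ := exists_mem_inner_eq_sfn K u
    obtain ⟨y, hy, hyu⟩ := exists_mem_inner_eq_sfn L u
    have hxy : x + y ∈ K + L := by
      rw [← SetLike.mem_coe, ConvexBody.coe_add]; exact Set.add_mem_add hx hy
    rw [← hxu, ← hyu, ← inner_add_left]
    exact inner_le_sfn hxy u

lemma sfn_smul (K : ConvexBody E) {a : ℝ} (ha : 0 ≤ a) (u : E) :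
    sfn (a • K) u = a * sfn K u := by
  refine le_antisymm (sfn_le fun z hz => ?_) ?_
  · rw [← SetLike.mem_coe, ConvexBody.coe_smul] at hz
    obtain ⟨x, hx, rfl⟩ := hz
    rw [real_inner_smul_left]
    exact mul_le_mul_of_nonneg_left (inner_le_sfn hx u) ha
  · obtain ⟨x, hx, hxu⟩ := exists_mem_inner_eq_sfn K u
    have hax : a • x ∈ a • K := by
      rw [← SetLike.mem_coe, ConvexBody.coe_smul]; exact Set.smul_mem_smul_set hx
    rw [← hxu, ← real_inner_smul_left]
    exact inner_le_sfn hax u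

lemma sfn_add_le (K : ConvexBody E) (u v : E) : sfn K (u + v) ≤ sfn K u + sfn K v :=
  sfn_le fun x hx => by
    rw [inner_add_right]; exact add_le_add (inner_le_sfn hx u) (inner_le_sfn hx v)

lemma sfn_smul_right (K : ConvexBody E) {a : ℝ} (ha : 0 ≤ a) (u : E) :
    sfn K (a • u) = a * sfn K u := by
  obtain ⟨x, hx, hxu⟩ := exists_mem_inner_eq_sfn K u
  rw [← hxu, ← real_inner_smul_right]
  refine sfn_eq_of_forall_le hx fun y hy => ?_
  rw [real_inner_smul_right, real_inner_smul_right, hxu]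
  exact mul_le_mul_of_nonneg_left (inner_le_sfn hy u) ha

lemma sfn_eq_of_coe_eq_convexHull {K : ConvexBody E} {s : Set E}
    (hK : (K : Set E) = convexHull ℝ s) {a u : E} (ha : a ∈ s)
    (hmax : ∀ b ∈ s, ⟪b, u⟫ ≤ ⟪a, u⟫) : sfn K u = ⟪a, u⟫ := by
  have hKa : (K : Set E) ⊆ {y | ⟪y, u⟫ ≤ ⟪a, u⟫} := hK ▸ convexHull_min hmax
    (convex_halfSpace_le ((innerₗ E).flip u).isLinear _)
  have haK : a ∈ K := by rw [← SetLike.mem_coe, hK]; exact subset_convexHull ℝ s ha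
  exact sfn_eq_of_forall_le haK hKa

lemma mem_of_forall_inner_le_sfn {K : ConvexBody E} {x : E} (h : ∀ u, ⟪x, u⟫ ≤ sfn K u) :
    x ∈ K := by
  by_contra hx
  obtain ⟨f, s, hfK, hsx⟩ := geometric_hahn_banach_closed_point K.convex K.isClosed hx
  set u := (InnerProductSpace.toDual ℝ E).symm f
  have hfu : ∀ y, ⟪y, u⟫ = f y := fun y => by
    rw [real_inner_comm]; exact InnerProductSpace.toDual_symm_apply
  obtain ⟨y, hy, hyu⟩ := exists_mem_inner_eq_sfn K u
  have := h u
  rw [← hyu, hfu, hfu] at this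
  linarith [hfK y hy]

lemma eq_of_sfn_eq {K L : ConvexBody E} (h : ∀ u, sfn K u = sfn L u) : K = L :=
  le_antisymm (fun _ hx => mem_of_forall_inner_le_sfn fun u => h u ▸ inner_le_sfn hx u)
    fun _ hx => mem_of_forall_inner_le_sfn fun u => h u ▸ inner_le_sfn hx u

lemma sfn_le_sfn_add_dist_mul (K L : ConvexBody E) (u : E) :
    sfn K u ≤ sfn L u + dist K L * ‖u‖ := by
  refine sfn_le fun x hx => ?_
  obtain ⟨y, hy, hxy⟩ := L.isCompact.exists_infDist_eq_dist L.nonempty x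
  have hdist : dist x y ≤ dist K L := by
    rw [← hxy, ← ConvexBody.hausdorffDist_coe]
    exact Metric.infDist_le_hausdorffDist_of_mem hx ConvexBody.hausdorffEDist_ne_top
  calc ⟪x, u⟫ = ⟪y, u⟫ + ⟪x - y, u⟫ := by rw [inner_sub_left]; ring
    _ ≤ sfn L u + ‖x - y‖ * ‖u‖ := add_le_add (inner_le_sfn hy u) (real_inner_le_norm _ _)
    _ ≤ sfn L u + dist K L * ‖u‖ := by rw [← dist_eq_norm]; gcongr

lemma lipschitzWith_sfn (u : E) : LipschitzWith ‖u‖₊ fun K : ConvexBody E => sfn K u :=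
  LipschitzWith.of_le_add_mul _ fun K L => by
    simpa [mul_comm] using sfn_le_sfn_add_dist_mul K L u

lemma exists_forall_inner_le_of_sublinear {f : E → ℝ}
    (hf_smul : ∀ c : ℝ, 0 < c → ∀ u, f (c • u) = c * f u) (hf_add : ∀ u v, f (u + v) ≤ f u + f v)
    (u : E) : ∃ y : E, (∀ w, ⟪y, w⟫ ≤ f w) ∧ ⟪y, u⟫ = f u := by
  have hf_zero : f 0 = 0 := by
    have := hf_smul 2 two_pos 0
    rw [smul_zero] at this
    linarith
  set p : E →ₗ.[ℝ] ℝ := LinearPMap.mkSpanSingleton' u (f u) fun c hcu => by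
    rcases smul_eq_zero.1 hcu with rfl | rfl
    · exact zero_smul _ _
    · rw [hf_zero, smul_zero]
  have hp : ∀ c : ℝ, ∀ h, p ⟨c • u, h⟩ = c * f u := fun c h =>
    (LinearPMap.mkSpanSingleton'_apply _ _ _ c h).trans (smul_eq_mul _ _)
  have hpf : ∀ z : p.domain, p z ≤ f z := by
    rintro ⟨z, hz⟩
    obtain ⟨c, rfl⟩ := Submodule.mem_span_singleton.1 hz
    rw [hp]
    change c * f u ≤ f (c • u)
    rcases lt_trichotomy c 0 with hc | rfl | hc
    · have hneg : 0 ≤ f u + f (-u) := by simpa [hf_zero] using hf_add u (-u)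
      rw [← neg_smul_neg, hf_smul _ (neg_pos.2 hc)]
      nlinarith
    · simp [hf_zero]
    · rw [hf_smul c hc]
  obtain ⟨g, hgp, hgf⟩ := exists_extension_of_le_sublinear p f hf_smul hf_add hpf
  refine ⟨(InnerProductSpace.toDual ℝ E).symm (LinearMap.toContinuousLinearMap g),
    fun w => ?_, ?_⟩ <;> rw [InnerProductSpace.toDual_symm_apply]
  · exact hgf w
  · exact (hgp ⟨u, Submodule.mem_span_singleton_self u⟩).trans <|
      LinearPMap.mkSpanSingleton'_apply_self _ _ _ _

lemma exists_sfn_eq_of_sublinear {f : E → ℝ}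
    (hf_smul : ∀ c : ℝ, 0 < c → ∀ u, f (c • u) = c * f u) (hf_add : ∀ u v, f (u + v) ≤ f u + f v) :
    ∃ K : ConvexBody E, ∀ u, sfn K u = f u := by
  have hdom := exists_forall_inner_le_of_sublinear hf_smul hf_add
  have hf_smul' : ∀ c : ℝ, 0 ≤ c → ∀ u, f (c • u) = c * f u := by
    intro c hc u
    rcases hc.eq_or_lt with rfl | hc
    · obtain ⟨y, -, hy⟩ := hdom 0
      simp [← hy]
    · exact hf_smul c hc u
  have hf_convex : ConvexOn ℝ Set.univ f := ⟨convex_univ, fun x _ y _ a b ha hb _ =>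
    (hf_add _ _).trans (by rw [hf_smul' a ha, hf_smul' b hb, smul_eq_mul, smul_eq_mul])⟩
  obtain ⟨C, hC⟩ := (isCompact_closedBall (0 : E) 1).bddAbove_image
    ((hf_convex.continuousOn isOpen_univ).mono (Set.subset_univ _))
  set S : Set E := ⋂ w, {y | ⟪y, w⟫ ≤ f w}
  have hS_bdd : S ⊆ Metric.closedBall 0 C := fun y hy => by
    rw [mem_closedBall_zero_iff]
    have hyu : ‖y‖ = ⟪y, ‖y‖⁻¹ • y⟫ := by
      rw [real_inner_smul_right, real_inner_self_eq_norm_mul_norm, ← mul_assoc, inv_mul_mul_self]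
    have hu : ‖‖y‖⁻¹ • y‖ ≤ 1 := by
      rcases eq_or_ne y 0 with rfl | hy0
      · simp
      · rw [norm_smul, norm_inv, norm_norm, inv_mul_cancel₀ (norm_ne_zero_iff.2 hy0)]
    rw [hyu]
    exact (Set.mem_iInter.1 hy _).trans (hC ⟨_, mem_closedBall_zero_iff.2 hu, rfl⟩)
  have hS_closed : IsClosed S := isClosed_iInter fun w =>
    isClosed_le (continuous_id.inner continuous_const) continuous_const
  have hS_convex : Convex ℝ S := convex_iInter fun w =>
    convex_halfSpace_le ((innerₗ E).flip w).isLinear _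
  obtain ⟨y₀, hy₀, -⟩ := hdom 0
  let K : ConvexBody E := ⟨S, hS_convex,
    (isCompact_closedBall 0 C).of_isClosed_subset hS_closed hS_bdd, ⟨y₀, Set.mem_iInter.2 hy₀⟩⟩
  refine ⟨K, fun u => le_antisymm (sfn_le fun y hy => Set.mem_iInter.1 hy u) ?_⟩
  obtain ⟨y, hy, hyu⟩ := hdom u
  exact hyu ▸ inner_le_sfn (K := K) (Set.mem_iInter.2 hy) u

def sfnDefect (K : ConvexBody E) (u v : E) : ℝ := sfn K u + sfn K v - sfn K (u + v)

lemma sfnDefect_nonneg (K : ConvexBody E) (u v : E) : 0 ≤ sfnDefect K u v :=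
  sub_nonneg.2 (sfn_add_le K u v)

lemma sfnDefect_smul (K : ConvexBody E) {a : ℝ} (ha : 0 ≤ a) (u v : E) :
    sfnDefect (a • K) u v = a * sfnDefect K u v := by
  simp only [sfnDefect, sfn_smul K ha]; ring

lemma continuous_sfnDefect (u v : E) : Continuous fun K : ConvexBody E => sfnDefect K u v :=
  ((lipschitzWith_sfn u).continuous.add (lipschitzWith_sfn v).continuous).sub
    (lipschitzWith_sfn (u + v)).continuous

lemma exists_add_eq_of_sfnDefect_le {K Q : ConvexBody E}
    (h : ∀ u v, sfnDefect K u v ≤ sfnDefect Q u v) : ∃ R, Q = K + R := by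
  obtain ⟨R, hR⟩ := exists_sfn_eq_of_sublinear (f := fun u => sfn Q u - sfn K u)
    (fun c hc u => by simp only [sfn_smul_right _ hc.le]; ring)
    (fun u v => by have := h u v; simp only [sfnDefect] at this; linarith)
  exact ⟨R, eq_of_sfn_eq fun u => by rw [sfn_add, hR]; ring⟩

lemma exists_convexBody_coe_eq_convexHull {s : Finset E} (hs : s.Nonempty) :
    ∃ K : ConvexBody E, (K : Set E) = convexHull ℝ s :=
  ⟨⟨convexHull ℝ s, convex_convexHull ℝ _, s.finite_toSet.isCompact_convexHull ℝ,
    hs.to_set.mono (subset_convexHull ℝ _)⟩, rfl⟩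

lemma nonempty_of_coe_eq_convexHull {K : ConvexBody E} {s : Finset E}
    (hK : (K : Set E) = convexHull ℝ s) : s.Nonempty := by
  simpa [← Finset.coe_nonempty, ← convexHull_nonempty_iff (𝕜 := ℝ), ← hK] using K.nonempty

lemma IsPolytope.right_of_add {K R : ConvexBody E} (h : IsPolytope (K + R)) : IsPolytope R := by
  classical
  obtain ⟨s, hs⟩ := h
  have hs_ne := nonempty_of_coe_eq_convexHull hs
  have hsplit : ∀ v ∈ s, ∃ r ∈ R, ∃ k ∈ K, k + r = v := fun v hv => by
    have : v ∈ (K : Set E) + R := by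
      rw [← ConvexBody.coe_add, hs]; exact subset_convexHull ℝ _ hv
    obtain ⟨k, hk, r, hr, hkr⟩ := this
    exact ⟨r, hr, k, hk, hkr⟩
  choose! r hr k hk hkr using hsplit
  obtain ⟨RW, hRW⟩ := exists_convexBody_coe_eq_convexHull (hs_ne.image r)
  have hRW_le : RW ≤ R := fun x hx => by
    rw [← SetLike.mem_coe, hRW] at hx
    refine convexHull_min ?_ R.convex hx
    simpa [Set.subset_def] using hr
  refine ⟨s.image r, ?_⟩
  rw [← hRW, eq_of_sfn_eq fun u => le_antisymm ?_ (sfn_mono hRW_le u)]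
  -- a vertex `v` of `K + R` maximal in direction `u` splits into maximizers of `u` on `K` and `R`
  obtain ⟨v, hv, hvmax⟩ := s.exists_max_image (⟪·, u⟫) hs_ne
  have hsum : sfn K u + sfn R u = ⟪k v, u⟫ + ⟪r v, u⟫ := by
    rw [← sfn_add, sfn_eq_of_coe_eq_convexHull hs hv hvmax, ← inner_add_left, hkr v hv]
  have hrRW : r v ∈ RW := by
    rw [← SetLike.mem_coe, hRW]
    exact subset_convexHull ℝ _ (Finset.mem_coe.2 (Finset.mem_image_of_mem r hv))
  linarith [inner_le_sfn (hk v hv) u, inner_le_sfn hrRW u]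

lemma IsPolytope.isPiecewiseLinear_sfn {K : ConvexBody E} (hK : IsPolytope K) :
    IsPiecewiseLinear (sfn K) := by
  classical
  obtain ⟨s, hs⟩ := hK
  refine ⟨s, inferInstance, fun a => PointedCone.dual .id (s.image fun b => innerₗ E (a - b)),
    fun a => innerₗ E a, fun a => PointedCone.DualFG.dual_of_finset _ _, fun u => ?_,
    fun a u hu => sfn_eq_of_coe_eq_convexHull hs a.2 fun b hb => ?_⟩
  · obtain ⟨a, ha, hmax⟩ := s.exists_max_image (⟪·, u⟫) (nonempty_of_coe_eq_convexHull hs)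
    refine ⟨⟨a, ha⟩, ?_⟩
    simpa [inner_sub_left] using hmax
  · simpa [inner_sub_left] using hu (Finset.mem_image_of_mem _ hb)

lemma IsPolytope.isPiecewiseLinear_sfnDefect {K : ConvexBody E} (hK : IsPolytope K) :
    IsPiecewiseLinear fun z : E × E => sfnDefect K z.1 z.2 :=
  ((hK.isPiecewiseLinear_sfn.comp_linearMap (LinearMap.fst ℝ E E)).add
    (hK.isPiecewiseLinear_sfn.comp_linearMap (LinearMap.snd ℝ E E))).sub
    (hK.isPiecewiseLinear_sfn.comp_linearMap (LinearMap.fst ℝ E E + LinearMap.snd ℝ E E))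

lemma integrable_sfn [MeasurableSpace (ConvexBody E)] [OpensMeasurableSpace (ConvexBody E)]
    {μ : Measure (ConvexBody E)} [IsFiniteMeasure μ]
    {s : Set (ConvexBody E)} (hs : Bornology.IsBounded s) (hμs : ∀ᵐ K ∂μ, K ∈ s) (u : E) :
    Integrable (fun K => sfn K u) μ := by
  obtain ⟨r, hr⟩ := hs.subset_closedBall 0
  refine Integrable.of_bound (lipschitzWith_sfn u).continuous.aestronglyMeasurable (‖u‖ * r) ?_
  filter_upwards [hμs] with K hK
  have := (lipschitzWith_sfn u).dist_le_mul K 0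
  rw [sfn_zero, dist_zero_right, coe_nnnorm] at this
  exact this.trans (mul_le_mul_of_nonneg_left (Metric.mem_closedBall.1 (hr hK)) (norm_nonneg u))

lemma sfnDefect_pos_of_mem_msupport [MeasurableSpace (ConvexBody E)] {μ : Measure (ConvexBody E)}
    {Q P : ConvexBody E}
    (hint : ∀ u, Integrable (fun K => sfn K u) μ) (hQ : ∀ u, sfn Q u = ∫ K, sfn K u ∂μ)
    (hP : P ∈ msupport μ) {u v : E} (h : 0 < sfnDefect P u v) : 0 < sfnDefect Q u v := by
  have hQ_eq : sfnDefect Q u v = ∫ K, sfnDefect K u v ∂μ := by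
    simp only [sfnDefect, hQ]
    rw [integral_sub (f := fun K => sfn K u + sfn K v) ((hint u).add (hint v)) (hint _),
      integral_add (hint u) (hint v)]
  rw [hQ_eq]
  exact integral_pos_of_mem_msupport (continuous_sfnDefect u v) (fun K => sfnDefect_nonneg K u v)
    (((hint u).add (hint v)).sub (hint _)) hP h

end SupportFunction

theorem support_of_generating_measure_scaled_summands {n : ℕ}
    [MeasurableSpace (ConvexBody (EuclideanSpace ℝ (Fin n)))]
    [BorelSpace (ConvexBody (EuclideanSpace ℝ (Fin n)))]
    (μ : Measure (ConvexBody (EuclideanSpace ℝ (Fin n)))) [IsProbabilityMeasure μ]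
    (hconc : μ (Polytopes n)ᶜ = 0)
    (hbd : Bornology.IsBounded (Polytopes n ∩ msupport μ))
    (Q : ConvexBody (EuclideanSpace ℝ (Fin n))) (hQpoly : IsPolytope Q)
    (hQ : ∀ u, sfn Q u = ∫ P, sfn P u ∂μ) :
    ∀ P ∈ Polytopes n ∩ msupport μ,
      ∃ (α : ℝ), 0 < α ∧ ∃ R : ConvexBody (EuclideanSpace ℝ (Fin n)), IsPolytope R ∧
        (Q : Set (EuclideanSpace ℝ (Fin n))) =
          α • (P : Set (EuclideanSpace ℝ (Fin n))) + (R : Set (EuclideanSpace ℝ (Fin n))) := by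
  rintro P ⟨hP, hPμ⟩
  have hint := integrable_sfn hbd ((ae_iff.2 hconc).and (ae_mem_msupport μ))
  obtain ⟨α, hle, hα⟩ := ((hQpoly.isPiecewiseLinear_sfnDefect.eventually_smul_le
    hP.isPiecewiseLinear_sfnDefect (fun z => sfnDefect_nonneg Q z.1 z.2)
    fun z => sfnDefect_pos_of_mem_msupport hint hQ hPμ).and self_mem_nhdsWithin).exists
  obtain ⟨R, hQR⟩ := exists_add_eq_of_sfnDefect_le (K := α • P) (Q := Q) fun u v => by
    rw [sfnDefect_smul P hα.le]; exact hle (u, v)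
  subst hQR
  exact ⟨α, hα, R, hQpoly.right_of_add, by rw [ConvexBody.coe_add, ConvexBody.coe_smul]⟩
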